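/- arXiv:1309.1304 — 5 statements merged into one kernel-verified Lean document; each statement's English description precedes it below -/
import Mathlib

section
/- Let $K \subset \mathbb{R}^2$ be a compact set which is intervally thin in two linearly independent directions $v_1, v_2 \in S^1$. Assume that the set of pairs $(x,y) \in \mathbb{R}^2 \times \mathbb{R}^2$ with $x \neq y$ for which the intersection $K \cap [x,y]$ of $K$ with the closed segment $[x,y]$ is at most countable is dense in $\mathbb{R}^2 \times \mathbb{R}^2$. Then $K$ is $c$-removable. -/
/-!
By thinness, every chord of `f` in direction `vᵢ` is a limit of chords of segments missing `K`,
on which `f` is convex; so `f` is convex on all lines parallel to `v₁` or `v₂`.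

On a segment meeting `K` in a countable set the restriction `g` of `f` is convex. Otherwise a
perturbation `g - σ • id` with a suitable slope `σ` has a leftmost interior maximum at a point off
`K`, where local convexity forbids it. The slopes to be avoided form a countable set: a point
maximizing `g - σ • id` for two slopes is a concave corner of `g`. Concave corners do not occur:
in the coordinates of the basis `v₁, v₂`, `f` is separately convex, and a concave corner on the
diagonal would make the linear lower bound of `f` along one axis increase without end.

Such segments are dense, and the set of pairs satisfying a chord inequality of `f` is closed.
-/

/-- `f` is locally convex on the open set `U`: every point of `U` has an open convex
neighbourhood `V ⊆ U` on which `f` is convex. -/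
def IsLocallyConvexOn (U : Set (EuclideanSpace ℝ (Fin 2)))
    (f : EuclideanSpace ℝ (Fin 2) → ℝ) : Prop :=
  ∀ x ∈ U, ∃ V : Set (EuclideanSpace ℝ (Fin 2)),
    IsOpen V ∧ Convex ℝ V ∧ x ∈ V ∧ V ⊆ U ∧ ConvexOn ℝ V f

/-- A closed set `A ⊆ ℝ²` is `c`-removable if every function continuous on `ℝ²` and
locally convex on `ℝ² \ A` is convex. -/
def CRemovable (A : Set (EuclideanSpace ℝ (Fin 2))) : Prop :=
  ∀ f : EuclideanSpace ℝ (Fin 2) → ℝ,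
    Continuous f → IsLocallyConvexOn Aᶜ f → ConvexOn ℝ Set.univ f

/-- `A` is intervally thin in the direction `v`. -/
def IntervallyThinIn (A : Set (EuclideanSpace ℝ (Fin 2)))
    (v : EuclideanSpace ℝ (Fin 2)) : Prop :=
  ∀ x y : EuclideanSpace ℝ (Fin 2), (∃ t : ℝ, x - y = t • v) → ∀ ε > 0,
    ∃ x' ∈ Metric.ball x ε, ∃ y' ∈ Metric.ball y ε, segment ℝ x' y' ∩ A = ∅

open Set Filter Topology

def HasConcaveCornerAt (g : ℝ → ℝ) (t : ℝ) : Prop :=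
  ∃ σ τ : ℝ, σ < τ ∧ ∀ᶠ r in 𝓝[>] 0, g (t + r) ≤ g t + σ * r ∧ g (t - r) ≤ g t - τ * r

theorem HasConcaveCornerAt.of_sub_linear {g : ℝ → ℝ} {α t : ℝ}
    (h : HasConcaveCornerAt (fun x => g x - α * x) t) : HasConcaveCornerAt g t := by
  obtain ⟨σ, τ, hστ, hev⟩ := h
  refine ⟨σ + α, τ + α, by linarith, hev.mono fun r hr => ⟨?_, ?_⟩⟩
  · linear_combination hr.1
  · linear_combination hr.2

theorem hasConcaveCornerAt_of_isMaxOn {g : ℝ → ℝ} {a b t σ τ : ℝ} (ht : t ∈ Ioo a b)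
    (hστ : σ < τ) (hσ : IsMaxOn (fun x => g x - σ * x) (Icc a b) t)
    (hτ : IsMaxOn (fun x => g x - τ * x) (Icc a b) t) : HasConcaveCornerAt g t := by
  refine ⟨σ, τ, hστ, ?_⟩
  filter_upwards [Ioo_mem_nhdsGT (lt_min (sub_pos.2 ht.1) (sub_pos.2 ht.2))]
    with r ⟨hr₀, hr⟩
  have hra : r < t - a := hr.trans_le (min_le_left _ _)
  have hrb : r < b - t := hr.trans_le (min_le_right _ _)
  have hright := isMaxOn_iff.1 hσ (t + r) ⟨by linarith, by linarith⟩
  have hleft := isMaxOn_iff.1 hτ (t - r) ⟨by linarith, by linarith⟩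
  exact ⟨by linear_combination hright, by linear_combination hleft⟩

theorem ContinuousOn.exists_isMaxOn_forall_lt {ψ : ℝ → ℝ} {a b : ℝ} (hab : a ≤ b)
    (hψ : ContinuousOn ψ (Icc a b)) :
    ∃ t ∈ Icc a b, IsMaxOn ψ (Icc a b) t ∧ ∀ x ∈ Icc a b, x < t → ψ x < ψ t := by
  obtain ⟨t₀, ht₀, hmax⟩ := isCompact_Icc.exists_isMaxOn (nonempty_Icc.2 hab) hψ
  set M := Icc a b ∩ ψ ⁻¹' Ici (ψ t₀)
  have hM : IsCompact M := isCompact_Icc.of_isClosed_subset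
    (hψ.preimage_isClosed_of_isClosed isClosed_Icc isClosed_Ici) inter_subset_left
  obtain ⟨ht, hψt⟩ : sInf M ∈ M := hM.sInf_mem ⟨t₀, ht₀, (le_rfl : ψ t₀ ≤ ψ t₀)⟩
  refine ⟨sInf M, ht, fun x hx => (isMaxOn_iff.1 hmax x hx).trans hψt, fun x hx hxt => ?_⟩
  by_contra! h
  exact hxt.not_ge (csInf_le hM.bddBelow ⟨hx, hψt.trans h⟩)

theorem countable_setOf_exists_isMaxOn {g : ℝ → ℝ} {a b : ℝ} {S : Set ℝ} (hS : S.Countable)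
    (hcorner : ∀ t ∈ Ioo a b ∩ S, ¬HasConcaveCornerAt g t) :
    {σ : ℝ | ∃ t ∈ Ioo a b ∩ S, IsMaxOn (fun x => g x - σ * x) (Icc a b) t}.Countable := by
  refine ((hS.mono inter_subset_right).biUnion fun t ht => Subsingleton.countable
    (s := {σ : ℝ | IsMaxOn (fun x => g x - σ * x) (Icc a b) t}) ?_).mono
    fun σ ⟨t, ht, h⟩ => mem_biUnion ht h
  intro σ hσ τ hτ
  by_contra hne
  rcases lt_or_gt_of_ne hne with h | h
  · exact hcorner t ht (hasConcaveCornerAt_of_isMaxOn ht.1 h hσ hτ)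
  · exact hcorner t ht (hasConcaveCornerAt_of_isMaxOn ht.1 h hτ hσ)

theorem le_max_of_not_hasConcaveCornerAt {g : ℝ → ℝ} {a b : ℝ} {S : Set ℝ}
    (hg : ContinuousOn g (Icc a b)) (hS : S.Countable)
    (hmid : ∀ t ∈ Ioo a b \ S, ∀ᶠ r in 𝓝[>] 0, 2 * g t ≤ g (t - r) + g (t + r))
    (hcorner : ∀ t ∈ Ioo a b ∩ S, ¬HasConcaveCornerAt g t) :
    ∀ y ∈ Icc a b, g y ≤ max (g a) (g b) := by
  intro y hy
  by_contra! hgy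
  have hya : a < y := hy.1.lt_of_ne (by rintro rfl; exact (le_max_left _ _).not_gt hgy)
  have hyb : y < b := hy.2.lt_of_ne (by rintro rfl; exact (le_max_right _ _).not_gt hgy)
  set δ := (g y - max (g a) (g b)) / (b - a)
  have hδ : 0 < δ := div_pos (sub_pos.2 hgy) (by linarith)
  have hδab : δ * (b - a) = g y - max (g a) (g b) := div_mul_cancel₀ _ (by linarith)
  obtain ⟨σ, hσS, hσ⟩ :=
    ((countable_setOf_exists_isMaxOn hS hcorner).dense_compl ℝ).exists_mem_open isOpen_Ioo
      (nonempty_Ioo.2 (neg_lt_self hδ))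
  have hψ : ContinuousOn (fun x => g x - σ * x) (Icc a b) :=
    hg.sub (continuousOn_const.mul continuousOn_id)
  obtain ⟨t, ht, hmax, hleft⟩ := hψ.exists_isMaxOn_forall_lt (hya.trans hyb).le
  have hty := isMaxOn_iff.1 hmax y hy
  have hψa : g a - σ * a < g y - σ * y := by
    nlinarith [le_max_left (g a) (g b), mul_lt_mul_of_pos_right hσ.2 (sub_pos.2 hya),
      mul_le_mul_of_nonneg_left (show y - a ≤ b - a by linarith) hδ.le]
  have hψb : g b - σ * b < g y - σ * y := by
    nlinarith [le_max_right (g a) (g b), mul_lt_mul_of_pos_right hσ.1 (sub_pos.2 hyb),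
      mul_le_mul_of_nonneg_left (show b - y ≤ b - a by linarith) hδ.le]
  have hta : a < t := ht.1.lt_of_ne (by rintro rfl; linarith)
  have htb : t < b := ht.2.lt_of_ne (by rintro rfl; linarith)
  have htS : t ∉ S := fun htS => hσS ⟨t, ⟨⟨hta, htb⟩, htS⟩, hmax⟩
  obtain ⟨r, hr, ⟨hr₀, hr⟩⟩ := ((hmid t ⟨⟨hta, htb⟩, htS⟩).and
    (Ioo_mem_nhdsGT (lt_min (sub_pos.2 hta) (sub_pos.2 htb)))).exists
  have hra : r < t - a := hr.trans_le (min_le_left _ _)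
  have hrb : r < b - t := hr.trans_le (min_le_right _ _)
  have hright := isMaxOn_iff.1 hmax (t + r) ⟨by linarith, by linarith⟩
  have hleft := hleft (t - r) ⟨by linarith, by linarith⟩ (by linarith)
  linarith [show σ * (t - r) + σ * (t + r) = 2 * (σ * t) by ring]

theorem convexOn_Icc_of_not_hasConcaveCornerAt {g : ℝ → ℝ} {a b : ℝ} {S : Set ℝ}
    (hg : ContinuousOn g (Icc a b)) (hS : S.Countable)
    (hmid : ∀ t ∈ Ioo a b \ S, ∀ᶠ r in 𝓝[>] 0, 2 * g t ≤ g (t - r) + g (t + r))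
    (hcorner : ∀ t ∈ Ioo a b ∩ S, ¬HasConcaveCornerAt g t) :
    ConvexOn ℝ (Icc a b) g := by
  refine convexOn_of_slope_mono_adjacent (convex_Icc a b) fun {x y z} hx hz hxy hyz => ?_
  have hxz : x < z := hxy.trans hyz
  have hsub : Ioo x z ⊆ Ioo a b := Ioo_subset_Ioo hx.1 hz.2
  set α := (g z - g x) / (z - x)
  have hα : α * (z - x) = g z - g x := div_mul_cancel₀ _ (sub_pos.2 hxz).ne'
  have key := le_max_of_not_hasConcaveCornerAt (g := fun t => g t - α * t) (S := S)
    ((hg.mono (Icc_subset_Icc hx.1 hz.2)).sub (continuousOn_const.mul continuousOn_id)) hS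
    (fun t ht => (hmid t ⟨hsub ht.1, ht.2⟩).mono fun r hr => by
      linarith [show α * (t - r) + α * (t + r) = 2 * (α * t) by ring])
    (fun t ht hc => hcorner t ⟨hsub ht.1, ht.2⟩ hc.of_sub_linear) y ⟨hxy.le, hyz.le⟩
  have hmax : max (g x - α * x) (g z - α * z) = g x - α * x :=
    max_eq_left (by linarith)
  rw [hmax] at key
  calc (g y - g x) / (y - x) ≤ α := (div_le_iff₀ (sub_pos.2 hxy)).2 (by linarith)
    _ ≤ (g z - g y) / (z - y) := (le_div_iff₀ (sub_pos.2 hyz)).2 (by linarith)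

theorem ConvexOn.add_affine {s : Set ℝ} {φ : ℝ → ℝ} (hφ : ConvexOn ℝ s φ) (α β : ℝ) :
    ConvexOn ℝ s fun x => φ x + (α * x + β) := by
  refine ⟨hφ.1, fun x hx y hy a b ha hb hab => ?_⟩
  have h := hφ.2 hx hy ha hb hab
  simp only [smul_eq_mul] at h ⊢
  linear_combination h - β * hab

theorem ConvexOn.comp_mul_univ {φ : ℝ → ℝ} (hφ : ConvexOn ℝ univ φ) (c : ℝ) :
    ConvexOn ℝ univ fun x => φ (c * x) := by
  refine ⟨convex_univ, fun x _ y _ a b ha hb hab => ?_⟩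
  simpa only [smul_eq_mul, mul_add, mul_left_comm c] using
    hφ.2 (mem_univ (c * x)) (mem_univ (c * y)) ha hb hab

def SeparatelyConvex (G : ℝ → ℝ → ℝ) : Prop :=
  (∀ t, ConvexOn ℝ univ fun s => G s t) ∧ ∀ s, ConvexOn ℝ univ (G s)

namespace SeparatelyConvex

variable {G : ℝ → ℝ → ℝ}

theorem add_affine (hG : SeparatelyConvex G) (α β γ : ℝ) :
    SeparatelyConvex fun s t => G s t + (α * s + β * t + γ) := by
  refine ⟨fun t => ?_, fun s => ?_⟩
  · exact ((hG.1 t).add_affine α (β * t + γ)).congr fun s _ => by ring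
  · exact ((hG.2 s).add_affine β (α * s + γ)).congr fun t _ => by ring

theorem reflect (hG : SeparatelyConvex G) : SeparatelyConvex fun s t => G (-t) (-s) :=
  ⟨fun t => by simpa using (hG.2 (-t)).comp_mul_univ (-1),
    fun s => by simpa using (hG.1 (-s)).comp_mul_univ (-1)⟩

theorem add_mul_le_apply_zero_neg (hG : SeparatelyConvex G) {α c : ℝ}
    (hdiag : ∀ᶠ s in 𝓝[>] 0, G s s ≤ -(c * s)) (haxis : ∀ᶠ s in 𝓝[>] 0, α * s ≤ G s 0)
    {y : ℝ} (hy : 0 < y) : (α + c) * y ≤ G 0 (-y) := by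
  have hcont : Continuous fun s => G s (-y) :=
    continuousOn_univ.1 (by simpa using (hG.1 (-y)).continuousOn_interior)
  have hlim : Tendsto (fun s => G s (-y) - α * s) (𝓝[>] 0) (𝓝 (G 0 (-y) - α * 0)) :=
    ((hcont.sub (continuous_const.mul continuous_id)).tendsto 0).mono_left nhdsWithin_le_nhds
  suffices h : ∀ᶠ s in 𝓝[>] 0, (α + c) * y ≤ G s (-y) - α * s by
    simpa using ge_of_tendsto hlim h
  filter_upwards [hdiag, haxis, self_mem_nhdsWithin] with s hss hs0 (hs : 0 < s)
  have key := (hG.2 s).secant_mono_aux1 (mem_univ (-y)) (mem_univ s) (neg_lt_zero.2 hy) hs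
  refine le_of_mul_le_mul_left ?_ hs
  nlinarith [mul_le_mul_of_nonneg_left hs0 (by linarith : 0 ≤ s + y),
    mul_le_mul_of_nonneg_left hss hy.le]

theorem not_hasConcaveCornerAt_diag (hG : SeparatelyConvex G) :
    ¬HasConcaveCornerAt (fun r => G r r) 0 := by
  rintro ⟨σ, τ, hστ, hev⟩
  set c := (τ - σ) / 2
  set m := (σ + τ) / 2
  set H := fun s t => G s t + (-(m / 2) * s + -(m / 2) * t + -G 0 0)
  have hH : SeparatelyConvex H := hG.add_affine _ _ _
  have hdiag : ∀ᶠ r in 𝓝[>] 0, H r r ≤ -(c * r) ∧ H (-r) (-r) ≤ -(c * r) := by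
    filter_upwards [hev] with r hr
    simp only [zero_add, zero_sub] at hr
    exact ⟨by linear_combination hr.1, by linear_combination hr.2⟩
  -- Each pass across the two axes raises the linear lower bound on `H · 0` by `2 * c`.
  have hstep : ∀ α, (∀ᶠ s in 𝓝[>] 0, α * s ≤ H s 0) → ∀ y > 0, (α + 2 * c) * y ≤ H y 0 := by
    intro α hα y hy
    have hvert : ∀ᶠ s in 𝓝[>] 0, (α + c) * s ≤ H (-0) (-s) := by
      filter_upwards [self_mem_nhdsWithin] with s (hs : 0 < s)
      simpa using hH.add_mul_le_apply_zero_neg (hdiag.mono fun r hr => hr.1) hα hs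
    simpa [add_assoc, two_mul] using
      hH.reflect.add_mul_le_apply_zero_neg (hdiag.mono fun r hr => hr.2) hvert hy
  have hbase : ∀ y > 0, -H (-1) 0 * y ≤ H y 0 := by
    intro y hy
    have key := (hH.1 0).secant_mono_aux1 (mem_univ (-1)) (mem_univ y) (by norm_num) hy
    simp only [H] at key ⊢
    nlinarith
  have hiter : ∀ n : ℕ, ∀ y > 0, (-H (-1) 0 + 2 * c * n) * y ≤ H y 0 := by
    intro n
    induction n with
    | zero => simpa using hbase
    | succ n ih =>
      simpa [mul_add, add_assoc] using hstep _ (eventually_mem_nhdsWithin.mono ih)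
  obtain ⟨n, hn⟩ := exists_nat_gt ((H 1 0 + H (-1) 0) / (2 * c))
  have hc : 0 < 2 * c := by simp only [c]; linarith
  have := hiter n 1 one_pos
  rw [div_lt_iff₀ hc] at hn
  nlinarith

end SeparatelyConvex

section ConvexAlong

variable {E : Type*} [AddCommGroup E] [Module ℝ E]

def ConvexAlong (f : E → ℝ) (v : E) : Prop :=
  ∀ x, ConvexOn ℝ univ fun t : ℝ => f (x + t • v)

theorem ConvexAlong.smul {f : E → ℝ} {v : E} (h : ConvexAlong f v) (c : ℝ) :
    ConvexAlong f (c • v) := fun x => by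
  simpa only [smul_smul, mul_comm] using (h x).comp_mul_univ c

theorem ConvexAlong.not_hasConcaveCornerAt {f : E → ℝ} {v₁ v₂ : E} (h₁ : ConvexAlong f v₁)
    (h₂ : ConvexAlong f v₂) (p : E) (c₁ c₂ t : ℝ) :
    ¬HasConcaveCornerAt (fun r => f (p + r • (c₁ • v₁ + c₂ • v₂))) t := by
  set w := c₁ • v₁ + c₂ • v₂
  set G := fun s s' : ℝ => f (p + t • w + s • (c₁ • v₁) + s' • (c₂ • v₂))
  have hG : SeparatelyConvex G := by
    refine ⟨fun s' => ?_, fun s => (h₂.smul c₂) (p + t • w + s • (c₁ • v₁))⟩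
    simpa only [G, add_right_comm _ _ (s' • (c₂ • v₂))] using
      (h₁.smul c₁) (p + t • w + s' • (c₂ • v₂))
  have hGw : ∀ r, f (p + (t + r) • w) = G r r := fun r => by
    simp only [G, w]
    congr 1
    module
  rintro ⟨σ, τ, hστ, hev⟩
  refine hG.not_hasConcaveCornerAt_diag ⟨σ, τ, hστ, hev.mono fun r hr => ?_⟩
  simp only [zero_add, zero_sub, ← hGw, add_zero, ← sub_eq_add_neg]
  exact hr

end ConvexAlong

theorem chord_le_of_mem_closure {E : Type*} [TopologicalSpace E] [AddCommGroup E] [Module ℝ E]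
    [ContinuousAdd E] [ContinuousSMul ℝ E] {f : E → ℝ} (hf : Continuous f) {D : Set (E × E)}
    {a b : ℝ} (hD : ∀ y ∈ D, f (a • y.1 + b • y.2) ≤ a • f y.1 + b • f y.2) {y : E × E}
    (hy : y ∈ closure D) : f (a • y.1 + b • y.2) ≤ a • f y.1 + b • f y.2 :=
  closure_minimal hD (isClosed_le (f := fun y : E × E => f (a • y.1 + b • y.2)) (by fun_prop)
    (by fun_prop)) hy

local notation "ℝ²" => EuclideanSpace ℝ (Fin 2)

theorem IsLocallyConvexOn.eventually_two_mul_le {U : Set ℝ²} {f : ℝ² → ℝ}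
    (hlc : IsLocallyConvexOn U f) {p w : ℝ²} {t : ℝ} (ht : p + t • w ∈ U) :
    ∀ᶠ r in 𝓝 (0 : ℝ), 2 * f (p + t • w) ≤ f (p + (t - r) • w) + f (p + (t + r) • w) := by
  obtain ⟨V, hVo, -, hV, -, hfV⟩ := hlc _ ht
  have hleft := (by fun_prop : Continuous fun r : ℝ => p + (t - r) • w).tendsto' 0 _
    (by simp) (hVo.mem_nhds hV)
  have hright := (by fun_prop : Continuous fun r : ℝ => p + (t + r) • w).tendsto' 0 _
    (by simp) (hVo.mem_nhds hV)
  filter_upwards [hleft, hright] with r hrl hrr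
  have key := hfV.2 hrl hrr (by norm_num : (0 : ℝ) ≤ 1 / 2) (by norm_num : (0 : ℝ) ≤ 1 / 2)
    (by norm_num)
  rw [show (1 / 2 : ℝ) • (p + (t - r) • w) + (1 / 2 : ℝ) • (p + (t + r) • w) = p + t • w by
    module, smul_eq_mul, smul_eq_mul] at key
  linarith

theorem add_smul_sub_mem_segment {p q : ℝ²} {t : ℝ} (ht : t ∈ Icc (0 : ℝ) 1) :
    p + t • (q - p) ∈ segment ℝ p q :=
  segment_eq_image' ℝ p q ▸ mem_image_of_mem _ ht

theorem chord_le_of_countable_inter_segment {K : Set ℝ²} {f : ℝ² → ℝ} (hf : Continuous f)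
    (hlc : IsLocallyConvexOn Kᶜ f) {p q : ℝ²} (hK : (K ∩ segment ℝ p q).Countable)
    (hcorner : ∀ t ∈ Ioo (0 : ℝ) 1, p + t • (q - p) ∈ K →
      ¬HasConcaveCornerAt (fun r => f (p + r • (q - p))) t)
    {a b : ℝ} (ha : 0 ≤ a) (hb : 0 ≤ b) (hab : a + b = 1) :
    f (a • p + b • q) ≤ a • f p + b • f q := by
  rcases eq_or_ne p q with rfl | hpq
  · rw [Convex.combo_self hab, Convex.combo_self hab]
  have hS : ((fun r : ℝ => p + r • (q - p)) ⁻¹' (K ∩ segment ℝ p q)).Countable :=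
    hK.preimage ((add_right_injective p).comp (smul_left_injective ℝ (sub_ne_zero.2 hpq.symm)))
  have hconv : ConvexOn ℝ (Icc (0 : ℝ) 1) fun r => f (p + r • (q - p)) :=
    convexOn_Icc_of_not_hasConcaveCornerAt (by fun_prop) hS
      (fun t ⟨ht, htS⟩ => (hlc.eventually_two_mul_le fun htK =>
        htS ⟨htK, add_smul_sub_mem_segment (Ioo_subset_Icc_self ht)⟩).filter_mono
          nhdsWithin_le_nhds)
      (fun t ⟨ht, htS⟩ => hcorner t ht htS.1)
  have key := hconv.2 (left_mem_Icc.2 zero_le_one) (right_mem_Icc.2 zero_le_one) ha hb hab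
  obtain rfl : a = 1 - b := by linarith
  rw [show (1 - b) • p + b • q = p + ((1 - b) • (0 : ℝ) + b • (1 : ℝ)) • (q - p) by module]
  simpa only [zero_smul, add_zero, one_smul, add_sub_cancel] using key

theorem IntervallyThinIn.convexAlong {K : Set ℝ²} {v : ℝ²} (hthin : IntervallyThinIn K v)
    {f : ℝ² → ℝ} (hf : Continuous f) (hlc : IsLocallyConvexOn Kᶜ f) : ConvexAlong f v := by
  intro x
  refine ⟨convex_univ, fun s _ t _ a b ha hb hab => ?_⟩
  have hmem : (x + s • v, x + t • v) ∈ closure {y : ℝ² × ℝ² | segment ℝ y.1 y.2 ∩ K = ∅} := by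
    refine Metric.mem_closure_iff.2 fun ε hε => ?_
    obtain ⟨p, hp, q, hq, hpq⟩ := hthin (x + s • v) (x + t • v) ⟨s - t, by module⟩ ε hε
    refine ⟨(p, q), hpq, ?_⟩
    rw [Prod.dist_eq, max_lt_iff, dist_comm _ p, dist_comm _ q]
    exact ⟨hp, hq⟩
  have hfree : ∀ y ∈ {y : ℝ² × ℝ² | segment ℝ y.1 y.2 ∩ K = ∅},
      f (a • y.1 + b • y.2) ≤ a • f y.1 + b • f y.2 := fun y hy =>
    chord_le_of_countable_inter_segment hf hlc (by rw [inter_comm, hy]; exact countable_empty)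
      (fun r hr hrK => (eq_empty_iff_forall_notMem.1 hy _
        ⟨add_smul_sub_mem_segment (Ioo_subset_Icc_self hr), hrK⟩).elim) ha hb hab
  have key := chord_le_of_mem_closure hf hfree hmem
  obtain rfl : a = 1 - b := by linarith
  show f (x + ((1 - b) • s + b • t) • v) ≤ (1 - b) • f (x + s • v) + b • f (x + t • v)
  rwa [show x + ((1 - b) • s + b • t) • v = (1 - b) • (x + s • v) + b • (x + t • v) by module]

theorem statement1_general (K : Set (EuclideanSpace ℝ (Fin 2)))
    (v₁ v₂ : EuclideanSpace ℝ (Fin 2))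
    (hind : LinearIndependent ℝ ![v₁, v₂])
    (hthin₁ : IntervallyThinIn K v₁) (hthin₂ : IntervallyThinIn K v₂)
    (hdense : Dense {p : EuclideanSpace ℝ (Fin 2) × EuclideanSpace ℝ (Fin 2) |
      p.1 ≠ p.2 ∧ (K ∩ segment ℝ p.1 p.2).Countable}) :
    CRemovable K := by
  intro f hf hlc
  have h₁ := hthin₁.convexAlong hf hlc
  have h₂ := hthin₂.convexAlong hf hlc
  have hspan : ∀ w : ℝ², ∃ c₁ c₂ : ℝ, c₁ • v₁ + c₂ • v₂ = w := fun w => by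
    refine Submodule.mem_span_pair.1 ?_
    rw [← Matrix.range_cons_cons_empty v₁ v₂ ![],
      hind.span_eq_top_of_card_eq_finrank (by simp)]
    trivial
  refine ⟨convex_univ, fun x _ y _ a b ha hb hab =>
    chord_le_of_mem_closure hf (fun p hp => ?_) (hdense (x, y))⟩
  obtain ⟨c₁, c₂, hw⟩ := hspan (p.2 - p.1)
  exact chord_le_of_countable_inter_segment hf hlc hp.2
    (fun t _ _ => hw ▸ h₁.not_hasConcaveCornerAt h₂ p.1 c₁ c₂ t) ha hb hab

theorem statement1 (K : Set (EuclideanSpace ℝ (Fin 2))) (hK : IsCompact K)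
    (v₁ v₂ : EuclideanSpace ℝ (Fin 2)) (hv₁ : ‖v₁‖ = 1) (hv₂ : ‖v₂‖ = 1)
    (hind : LinearIndependent ℝ ![v₁, v₂])
    (hthin₁ : IntervallyThinIn K v₁) (hthin₂ : IntervallyThinIn K v₂)
    (hdense : Dense {p : EuclideanSpace ℝ (Fin 2) × EuclideanSpace ℝ (Fin 2) |
      p.1 ≠ p.2 ∧ (K ∩ segment ℝ p.1 p.2).Countable}) :
    CRemovable K :=
  statement1_general K v₁ v₂ hind hthin₁ hthin₂ hdense
end

section
/- Let $f : \mathbb{R}^2 \to \mathbb{R}$ be a separately convex function, and define $g : \mathbb{R} \to \mathbb{R}$ by $g(t) = f(t,t)$. Then for every $x \in \mathbb{R}$, $\liminf_{t \to 0^+} \frac{g(x+t) + g(x-t) - 2 g(x)}{t} \geq 0$. -/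
open Filter Set Topology

/-!
Walk from `(x - t, x - t)` to `(x + t, x + t)` along the staircase through `(x - t, x)`, `(x, x)` and
`(x, x + t)`: the second difference quotient of `g` becomes two horizontal and two vertical slopes
of one-variable convex slices of `f`. At `(x, x)` the horizontal slope is at most the left
derivative `A` of `f (·, x)` and the vertical one at least the right derivative `B` of `f (x, ·)`.
The two other slopes belong to the slices through `x + t` and `x - t`; these converge pointwise to
the slices through `x`, and since every secant of a convex function to the right of `x` dominates
every secant to its left, their slopes are eventually `≥ A - ε` and `≤ B + ε` respectively.
-/

theorem EReal.coe_le_liminf_of_forall_sub_le {α : Type*} {l : Filter α} {u : α → ℝ} {c : ℝ}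
    (h : ∀ ε > 0, ∀ᶠ a in l, c - ε ≤ u a) : (c : EReal) ≤ liminf (fun a ↦ (u a : EReal)) l := by
  refine (le_liminf_iff').2 fun y hy ↦ ?_
  obtain ⟨r, hyr, hrc⟩ := EReal.lt_iff_exists_real_btwn.1 hy
  have hrc : r < c := EReal.coe_lt_coe_iff.1 hrc
  filter_upwards [h (c - r) (by linarith)] with a ha
  exact hyr.le.trans (EReal.coe_le_coe_iff.2 (by linarith))

section SliceFamily

variable {ι : Type*} {l : Filter ι} {F : ι → ℝ → ℝ} {φ : ℝ → ℝ}

theorem tendsto_slope_of_tendsto_pointwise (hlim : ∀ u, Tendsto (fun i ↦ F i u) l (𝓝 (φ u))) (x z : ℝ) :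
    Tendsto (fun i ↦ slope (F i) x z) l (𝓝 (slope φ x z)) := by
  simp only [slope_def_field]
  exact ((hlim z).sub (hlim x)).div_const _

theorem ConvexOn.eventually_leftDeriv_sub_lt_slope (hφ : ConvexOn ℝ univ φ)
    (hF : ∀ i, ConvexOn ℝ univ (F i)) (hlim : ∀ u, Tendsto (fun i ↦ F i u) l (𝓝 (φ u)))
    (x : ℝ) {ε : ℝ} (hε : 0 < ε) :
    ∀ᶠ i in l, ∀ y, x < y → derivWithin φ (Iio x) x - ε < slope (F i) x y := by
  have hderiv := (hasDerivWithinAt_iff_tendsto_slope' self_notMem_Iio).1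
    (hφ.hasDerivWithinAt_leftDeriv_of_mem_interior (x := x) (by simp))
  obtain ⟨z, hz, hzx⟩ := ((hderiv.eventually (lt_mem_nhds (sub_lt_self _ hε))).and
    self_mem_nhdsWithin).exists
  filter_upwards [(tendsto_slope_of_tendsto_pointwise hlim x z).eventually (lt_mem_nhds hz)] with i hi y hxy
  exact hi.trans_le <| (hF i).slope_mono trivial ⟨trivial, (hzx : z < x).ne⟩ ⟨trivial, hxy.ne'⟩
    (hzx.trans hxy).le

theorem ConvexOn.eventually_slope_lt_rightDeriv_add (hφ : ConvexOn ℝ univ φ)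
    (hF : ∀ i, ConvexOn ℝ univ (F i)) (hlim : ∀ u, Tendsto (fun i ↦ F i u) l (𝓝 (φ u)))
    (x : ℝ) {ε : ℝ} (hε : 0 < ε) :
    ∀ᶠ i in l, ∀ y, y < x → slope (F i) x y < derivWithin φ (Ioi x) x + ε := by
  have hderiv := (hasDerivWithinAt_iff_tendsto_slope' self_notMem_Ioi).1
    (hφ.hasDerivWithinAt_rightDeriv_of_mem_interior (x := x) (by simp))
  obtain ⟨z, hz, hxz⟩ := ((hderiv.eventually (gt_mem_nhds (lt_add_of_pos_right _ hε))).and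
    self_mem_nhdsWithin).exists
  filter_upwards [(tendsto_slope_of_tendsto_pointwise hlim x z).eventually (gt_mem_nhds hz)] with i hi y hyx
  exact ((hF i).slope_mono trivial ⟨trivial, hyx.ne⟩ ⟨trivial, (hxz : x < z).ne'⟩
    (hyx.trans hxz).le).trans_lt hi

end SliceFamily

theorem secondDiff_diag_div_eq_slopes (f : ℝ × ℝ → ℝ) (x : ℝ) {t : ℝ} (ht : t ≠ 0) :
    (f (x + t, x + t) + f (x - t, x - t) - 2 * f (x, x)) / t =
      slope (fun u ↦ f (u, x + t)) x (x + t) + slope (fun y ↦ f (x, y)) x (x + t)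
        - slope (fun u ↦ f (u, x)) x (x - t) - slope (fun y ↦ f (x - t, y)) x (x - t) := by
  simp only [slope_def_field, add_sub_cancel_left, sub_sub_cancel_left]
  field_simp
  ring

theorem statement3 (f : ℝ × ℝ → ℝ)
    (hsep₁ : ∀ y : ℝ, ConvexOn ℝ Set.univ fun x : ℝ => f (x, y))
    (hsep₂ : ∀ x : ℝ, ConvexOn ℝ Set.univ fun y : ℝ => f (x, y))
    (g : ℝ → ℝ) (hg : ∀ t : ℝ, g t = f (t, t)) (x : ℝ) :
    0 ≤ liminf (fun t : ℝ =>
        (((g (x + t) + g (x - t) - 2 * g x) / t : ℝ) : EReal))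
      (nhdsWithin 0 (Set.Ioi 0)) := by
  have hcont₁ (y : ℝ) : Continuous fun u ↦ f (u, y) :=
    continuousOn_univ.1 ((hsep₁ y).continuousOn isOpen_univ)
  have hcont₂ (u : ℝ) : Continuous fun y ↦ f (u, y) :=
    continuousOn_univ.1 ((hsep₂ u).continuousOn isOpen_univ)
  have hplus : Tendsto (fun t ↦ x + t) (𝓝[>] 0) (𝓝 x) :=
    ((continuous_const_add x).tendsto' 0 x (add_zero x)).mono_left nhdsWithin_le_nhds
  have hminus : Tendsto (fun t ↦ x - t) (𝓝[>] 0) (𝓝 x) :=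
    ((continuous_sub_left x).tendsto' 0 x (sub_zero x)).mono_left nhdsWithin_le_nhds
  have hrow (u : ℝ) : Tendsto (fun t ↦ f (u, x + t)) (𝓝[>] 0) (𝓝 (f (u, x))) :=
    ((hcont₂ u).tendsto x).comp hplus
  have hcol (y : ℝ) : Tendsto (fun t ↦ f (x - t, y)) (𝓝[>] 0) (𝓝 (f (x, y))) :=
    ((hcont₁ y).tendsto x).comp hminus
  rw [← EReal.coe_zero]
  refine EReal.coe_le_liminf_of_forall_sub_le fun ε hε ↦ ?_
  filter_upwards [(hsep₁ x).eventually_leftDeriv_sub_lt_slope (fun t ↦ hsep₁ (x + t)) hrow x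
      (half_pos hε),
    (hsep₂ x).eventually_slope_lt_rightDeriv_add (fun t ↦ hsep₂ (x - t)) hcol x (half_pos hε),
    self_mem_nhdsWithin] with t hrowSlope hcolSlope (ht : 0 < t)
  have hcolRight := (hsep₂ x).rightDeriv_le_slope_of_mem_interior (by simp)
    (mem_univ (x + t)) (lt_add_of_pos_right x ht)
  have hrowLeft := (hsep₁ x).slope_le_leftDeriv_of_mem_interior (mem_univ (x - t))
    (by simp) (sub_lt_self x ht)
  rw [slope_comm] at hrowLeft
  rw [hg, hg, hg, secondDiff_diag_div_eq_slopes f x ht.ne']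
  linarith [hrowSlope (x + t) (lt_add_of_pos_right x ht), hcolSlope (x - t) (sub_lt_self x ht)]
end

section
/- The sequence $a_k := 3^k \prod_{j=0}^{k-1} \frac{3^{j+1}+3}{3^{j+1}+1} - 2 \sum_{m=0}^{k-1} 3^m \prod_{j=0}^{m-1} \frac{3^{j+1}+3}{3^{j+1}+1}$ tends to $+\infty$ as $k \to \infty$. -/
open Filter Finset

private lemma stmt7_P (k : ℕ) :
    1 ≤ ∏ j ∈ Finset.range k, ((3 : ℝ) ^ (j + 1) + 3) / ((3 : ℝ) ^ (j + 1) + 1) := by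
  induction k with
  | zero => simp
  | succ k ih =>
    rw [Finset.prod_range_succ]
    have h : (0:ℝ) < (3:ℝ) ^ (k+1) := by positivity
    have h2 : (1:ℝ) ≤ ((3 : ℝ) ^ (k + 1) + 3) / ((3 : ℝ) ^ (k + 1) + 1) := by
      rw [le_div_iff₀ (by linarith)]; linarith
    nlinarith

private lemma stmt7_lb (k : ℕ) :
    1 + (3/2 : ℝ) * k ≤
      (3 : ℝ) ^ k * ∏ j ∈ Finset.range k, ((3 : ℝ) ^ (j + 1) + 3) / ((3 : ℝ) ^ (j + 1) + 1)
        - 2 * ∑ m ∈ Finset.range k,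
            (3 : ℝ) ^ m * ∏ j ∈ Finset.range m,
              ((3 : ℝ) ^ (j + 1) + 3) / ((3 : ℝ) ^ (j + 1) + 1) := by
  induction k with
  | zero => simp
  | succ k ih =>
    have hP := stmt7_P k
    set P := ∏ j ∈ Finset.range k, ((3 : ℝ) ^ (j + 1) + 3) / ((3 : ℝ) ^ (j + 1) + 1) with hPdef
    have h3 : (0:ℝ) < (3:ℝ) ^ (k+1) := by positivity
    have h9 : (3:ℝ) ≤ (3:ℝ) ^ (k+1) := by
      calc (3:ℝ) = 3 ^ 1 := by norm_num
      _ ≤ 3 ^ (k+1) := by apply pow_le_pow_right₀ (by norm_num); omega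
    have hstep : (3:ℝ) ^ (k+1) * (P * (((3 : ℝ) ^ (k + 1) + 3) / ((3 : ℝ) ^ (k + 1) + 1)))
        - 3 * ((3:ℝ) ^ k * P) ≥ 3/2 := by
      rw [ge_iff_le, ← sub_nonneg]
      have key : (3:ℝ) ^ (k+1) * (P * ((3 ^ (k + 1) + 3) / (3 ^ (k + 1) + 1))) - 3 * (3 ^ k * P) - 3/2
          = (2 * 3 ^ (k+1) * P - 3/2 * (3 ^ (k+1) + 1)) / (3 ^ (k+1) + 1) := by
        field_simp
        ring
      rw [key]
      apply div_nonneg _ (by linarith)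
      nlinarith [mul_le_mul_of_nonneg_left hP h3.le]
    rw [Finset.prod_range_succ, Finset.sum_range_succ]
    push_cast
    nlinarith [hstep]
  
theorem statement7 :
    Tendsto (fun k : ℕ =>
        (3 : ℝ) ^ k * ∏ j ∈ Finset.range k, ((3 : ℝ) ^ (j + 1) + 3) / ((3 : ℝ) ^ (j + 1) + 1)
          - 2 * ∑ m ∈ Finset.range k,
              (3 : ℝ) ^ m * ∏ j ∈ Finset.range m,
                ((3 : ℝ) ^ (j + 1) + 3) / ((3 : ℝ) ^ (j + 1) + 1))
      atTop atTop := by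
  apply tendsto_atTop_mono stmt7_lb
  apply tendsto_atTop_add_const_left
  exact (tendsto_natCast_atTop_atTop (R := ℝ)).const_mul_atTop (by norm_num)
end

section
/- Let $M \subset \mathbb{R}^d$ be a Borel set of $\sigma$-finite $(d-1)$-dimensional Hausdorff measure. Then for almost every unit vector $v \in S^{d-1}$ (with respect to the surface measure on the unit sphere), the set of points $y$ in the orthogonal complement $v^{\perp}$ for which the line $\{y + t v : t \in \mathbb{R}\}$ intersects $M$ in an uncountable set has $(d-1)$-dimensional Hausdorff measure zero. -/
/-!
Fix a unit vector `v` and write `P` for the orthogonal projection onto `v^⊥`, so that the lines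
parallel to `v` are the fibres of `P`, and cover `M` by countably many sets `A` of finite measure.
Cutting `A` into slabs of width `2^{-m}` across `v` and counting, for each `y`, the slabs whose
image under the `1`-Lipschitz map `P` contains `y`, gives functions `N_m` with
`∫ N_m ≤ H^{d-1}(A)`. If the fibre of `y` in `A` is infinite, its points eventually lie in
distinct slabs, so `N_m(y) → ∞`; by Fatou's lemma this happens only on a null set.
-/

open MeasureTheory Filter Topology Set Function
open scoped ENNReal NNReal RealInnerProductSpace

theorem eventually_floor_mul_two_pow_ne {a b : ℝ} (hab : a ≠ b) :
    ∀ᶠ m : ℕ in atTop, ⌊a * 2 ^ m⌋ ≠ ⌊b * 2 ^ m⌋ := by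
  have hpos : 0 < |a - b| := abs_pos.mpr (sub_ne_zero.mpr hab)
  filter_upwards [(tendsto_pow_atTop_atTop_of_one_lt one_lt_two).eventually_ge_atTop
    (1 / |a - b|)] with m hm hfloor
  have hclose := Int.abs_sub_lt_one_of_floor_eq_floor hfloor
  rw [← sub_mul, abs_mul, abs_of_pos (by positivity : (0 : ℝ) < 2 ^ m)] at hclose
  rw [div_le_iff₀ hpos] at hm
  linarith

theorem Set.Finite.eventually_injOn_floor_mul_two_pow {X : Type*} {t : Set X} (ht : t.Finite)
    {T : X → ℝ} (hT : InjOn T t) :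
    ∀ᶠ m : ℕ in atTop, InjOn (fun x => ⌊T x * 2 ^ m⌋) t := by
  have hpairs : ∀ᶠ m : ℕ in atTop, ∀ p ∈ t ×ˢ t,
      p.1 ≠ p.2 → ⌊T p.1 * 2 ^ m⌋ ≠ ⌊T p.2 * 2 ^ m⌋ :=
    (ht.prod ht).eventually_all.2 fun p hp => by
      by_cases hp' : p.1 = p.2
      · exact Eventually.of_forall fun _ hne => absurd hp' hne
      · exact (eventually_floor_mul_two_pow_ne (hT.ne hp.1 hp.2 hp')).mono fun _ h _ => h
  filter_upwards [hpairs] with m hm x hx x' hx' h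
  by_contra hne
  exact hm (x, x') ⟨hx, hx'⟩ hne h

def dyadicSlab {X : Type*} (T : X → ℝ) (m : ℕ) (j : ℤ) : Set X :=
  (fun x => ⌊T x * 2 ^ m⌋) ⁻¹' {j}

theorem measurableSet_dyadicSlab {X : Type*} [MeasurableSpace X] {T : X → ℝ} (hT : Measurable T)
    (m : ℕ) (j : ℤ) : MeasurableSet (dyadicSlab T m j) :=
  Int.measurable_floor.comp (hT.mul measurable_const) (measurableSet_singleton j)

section DyadicFiberCount

variable {X Y : Type*} [EMetricSpace Y] [MeasurableSpace Y] [BorelSpace Y]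
  {s : ℝ} {P : X → Y} {T : X → ℝ} {A : Set X}

/-- The images under `P` are replaced by measurable hulls, as they need not be measurable. -/
noncomputable def dyadicFiberCount (s : ℝ) (P : X → Y) (T : X → ℝ) (A : Set X) (m : ℕ)
    (y : Y) : ℝ≥0∞ :=
  ∑' j : ℤ, (toMeasurable μH[s] (P '' (A ∩ dyadicSlab T m j))).indicator 1 y

theorem measurable_dyadicFiberCount (m : ℕ) : Measurable (dyadicFiberCount s P T A m) := by
  unfold dyadicFiberCount
  exact Measurable.tsum fun _ => measurable_one.indicator (measurableSet_toMeasurable _ _)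

theorem LipschitzWith.lintegral_dyadicFiberCount_le [EMetricSpace X] [MeasurableSpace X]
    [BorelSpace X] {K : ℝ≥0} (hP : LipschitzWith K P)
    (hs : 0 ≤ s) (hT : Measurable T) (hA : MeasurableSet A) (m : ℕ) :
    ∫⁻ y, dyadicFiberCount s P T A m y ∂μH[s] ≤ (K : ℝ≥0∞) ^ s * μH[s] A := by
  have hdisj : Pairwise (Disjoint on fun j => A ∩ dyadicSlab T m j) :=
    (pairwise_disjoint_fiber _).mono fun _ _ h => h.mono inter_subset_right inter_subset_right
  calc ∫⁻ y, dyadicFiberCount s P T A m y ∂μH[s]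
      = ∑' j, μH[s] (P '' (A ∩ dyadicSlab T m j)) := by
        unfold dyadicFiberCount
        rw [lintegral_tsum fun _ =>
          (measurable_one.indicator (measurableSet_toMeasurable _ _)).aemeasurable]
        simp_rw [lintegral_indicator_one (measurableSet_toMeasurable _ _), measure_toMeasurable]
    _ ≤ ∑' j, (K : ℝ≥0∞) ^ s * μH[s] (A ∩ dyadicSlab T m j) :=
        ENNReal.tsum_le_tsum fun j => hP.hausdorffMeasure_image_le hs _
    _ = (K : ℝ≥0∞) ^ s * ∑' j, μH[s] (A ∩ dyadicSlab T m j) := ENNReal.tsum_mul_left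
    _ ≤ (K : ℝ≥0∞) ^ s * μH[s] A := by
        gcongr
        exact (tsum_meas_le_meas_iUnion_of_disjoint _
          (fun j => hA.inter (measurableSet_dyadicSlab hT m j)) hdisj).trans
          (measure_mono (iUnion_subset fun _ => inter_subset_left))

theorem card_le_dyadicFiberCount {y : Y} {m : ℕ} {t : Finset X} (ht : ↑t ⊆ A ∩ P ⁻¹' {y})
    (hinj : InjOn (fun x => ⌊T x * 2 ^ m⌋) t) :
    (t.card : ℝ≥0∞) ≤ dyadicFiberCount s P T A m y := by
  have hmem : ∀ x ∈ t,
      y ∈ toMeasurable μH[s] (P '' (A ∩ dyadicSlab T m ⌊T x * 2 ^ m⌋)) := fun x hx =>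
    subset_toMeasurable _ _ ⟨x, ⟨(ht hx).1, rfl⟩, (ht hx).2⟩
  calc (t.card : ℝ≥0∞) = ∑ j ∈ t.image (fun x => ⌊T x * 2 ^ m⌋), 1 := by
        rw [Finset.sum_const, Finset.card_image_of_injOn hinj, nsmul_one]
    _ = ∑ j ∈ t.image (fun x => ⌊T x * 2 ^ m⌋),
          (toMeasurable μH[s] (P '' (A ∩ dyadicSlab T m j))).indicator 1 y := by
        refine Finset.sum_congr rfl fun j hj => ?_
        obtain ⟨x, hx, rfl⟩ := Finset.mem_image.mp hj
        rw [indicator_of_mem (hmem x hx), Pi.one_apply]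
    _ ≤ dyadicFiberCount s P T A m y := ENNReal.sum_le_tsum _

theorem tendsto_dyadicFiberCount_of_infinite {y : Y} (hT : InjOn T (A ∩ P ⁻¹' {y}))
    (hy : (A ∩ P ⁻¹' {y}).Infinite) :
    Tendsto (fun m => dyadicFiberCount s P T A m y) atTop (𝓝 ∞) := by
  refine ENNReal.tendsto_nhds_top fun n => ?_
  obtain ⟨t, ht, hcard⟩ := hy.exists_subset_card_eq (n + 1)
  filter_upwards [t.finite_toSet.eventually_injOn_floor_mul_two_pow (hT.mono ht)] with m hm
  calc (n : ℝ≥0∞) < (n + 1 : ℕ) := by exact_mod_cast n.lt_succ_self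
    _ = t.card := by rw [hcard]
    _ ≤ dyadicFiberCount s P T A m y := card_le_dyadicFiberCount ht hm

theorem LipschitzWith.hausdorffMeasure_setOf_infinite_fiber_eq_zero [EMetricSpace X]
    [MeasurableSpace X] [BorelSpace X] {K : ℝ≥0}
    (hP : LipschitzWith K P) (hs : 0 ≤ s) (hT : Measurable T)
    (hinj : ∀ y, InjOn T (P ⁻¹' {y})) (hA : MeasurableSet A) (hAfin : μH[s] A ≠ ∞) :
    μH[s] {y | (A ∩ P ⁻¹' {y}).Infinite} = 0 := by
  have hbound : (K : ℝ≥0∞) ^ s * μH[s] A ≠ ∞ :=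
    ENNReal.mul_ne_top (ENNReal.rpow_ne_top_of_nonneg hs ENNReal.coe_ne_top) hAfin
  have hfatou : ∫⁻ y, liminf (fun m => dyadicFiberCount s P T A m y) atTop ∂μH[s] ≠ ∞ :=
    ne_top_of_le_ne_top hbound <| (lintegral_liminf_le measurable_dyadicFiberCount).trans <|
      liminf_le_of_frequently_le' <| Frequently.of_forall
        (hP.lintegral_dyadicFiberCount_le hs hT hA)
  refine measure_mono_null (fun y hy => ?_)
    (ae_iff.1 (ae_lt_top (Measurable.liminf measurable_dyadicFiberCount) hfatou))
  rw [mem_ofPred_eq, (tendsto_dyadicFiberCount_of_infinite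
    ((hinj y).mono inter_subset_right) hy).liminf_eq]
  exact lt_irrefl _

theorem LipschitzWith.hausdorffMeasure_setOf_uncountable_fiber_eq_zero [EMetricSpace X]
    [MeasurableSpace X] [BorelSpace X] {K : ℝ≥0}
    (hP : LipschitzWith K P) (hs : 0 ≤ s) (hT : Measurable T)
    (hinj : ∀ y, InjOn T (P ⁻¹' {y})) {M : Set X}
    (hM : ∃ S : ℕ → Set X, M ⊆ ⋃ k, S k ∧ ∀ k, μH[s] (S k) < ∞) :
    μH[s] {y | ¬ (M ∩ P ⁻¹' {y}).Countable} = 0 := by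
  obtain ⟨S, hMS, hSfin⟩ := hM
  refine measure_mono_null (t := ⋃ k, {y | (toMeasurable μH[s] (S k) ∩ P ⁻¹' {y}).Infinite})
    (fun y hy => ?_) (measure_iUnion_null fun k =>
      hP.hausdorffMeasure_setOf_infinite_fiber_eq_zero hs hT hinj (measurableSet_toMeasurable _ _)
        (by rw [measure_toMeasurable]; exact (hSfin k).ne))
  by_contra hfinite
  simp only [mem_iUnion, mem_ofPred_eq, not_exists, Set.not_infinite] at hfinite
  refine hy (Countable.mono ?_ (countable_iUnion fun k => (hfinite k).countable))
  rintro x ⟨hxM, hxy⟩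
  obtain ⟨k, hk⟩ := mem_iUnion.mp (hMS hxM)
  exact mem_iUnion.mpr ⟨k, subset_toMeasurable _ _ hk, hxy⟩

end DyadicFiberCount

section Lines

variable {E : Type*} [NormedAddCommGroup E] [InnerProductSpace ℝ E] {v : E}

theorem starProjection_orthogonal_singleton_add_inner_smul (hv : ‖v‖ = 1) (x : E) :
    (ℝ ∙ v)ᗮ.starProjection x + ⟪x, v⟫ • v = x := by
  have hsplit := (ℝ ∙ v).starProjection_add_starProjection_orthogonal x
  rw [Submodule.starProjection_singleton, hv, real_inner_comm] at hsplit
  simpa [add_comm] using hsplit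

theorem injOn_inner_preimage_starProjection_orthogonal_singleton (hv : ‖v‖ = 1) (y : E) :
    InjOn (⟪·, v⟫) ((ℝ ∙ v)ᗮ.starProjection ⁻¹' {y}) := fun x hx x' hx' h => by
  rw [← starProjection_orthogonal_singleton_add_inner_smul hv x,
    ← starProjection_orthogonal_singleton_add_inner_smul hv x', mem_preimage.1 hx,
    mem_preimage.1 hx', show ⟪x, v⟫ = ⟪x', v⟫ from h]

theorem setOf_line_eq_preimage_starProjection_orthogonal_singleton (hv : ‖v‖ = 1) {y : E}
    (hy : y ∈ (ℝ ∙ v)ᗮ) :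
    {x | ∃ t : ℝ, x = y + t • v} = (ℝ ∙ v)ᗮ.starProjection ⁻¹' {y} := by
  ext x
  constructor
  · rintro ⟨t, rfl⟩
    have hv' : v ∈ (ℝ ∙ v)ᗮᗮ :=
      Submodule.le_orthogonal_orthogonal _ (Submodule.mem_span_singleton_self v)
    rw [mem_preimage, map_add, map_smul, Submodule.starProjection_eq_self_iff.mpr hy,
      (Submodule.starProjection_apply_eq_zero_iff _).mpr hv', smul_zero, add_zero,
      mem_singleton_iff]
  · intro hx
    exact ⟨⟪x, v⟫, by rw [← mem_singleton_iff.1 (mem_preimage.1 hx),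
      starProjection_orthogonal_singleton_add_inner_smul hv]⟩

theorem hausdorffMeasure_setOf_uncountable_line_eq_zero [MeasurableSpace E] [BorelSpace E]
    {s : ℝ} (hs : 0 ≤ s) (hv : ‖v‖ = 1) {M : Set E}
    (hM : ∃ S : ℕ → Set E, M ⊆ ⋃ k, S k ∧ ∀ k, μH[s] (S k) < ∞) :
    μH[s] {y | y ∈ (ℝ ∙ v)ᗮ ∧ ¬ (M ∩ {x | ∃ t : ℝ, x = y + t • v}).Countable} = 0 :=
  measure_mono_null
    (fun y ⟨hy, hunc⟩ => by
      rwa [setOf_line_eq_preimage_starProjection_orthogonal_singleton hv hy] at hunc)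
    (LipschitzWith.hausdorffMeasure_setOf_uncountable_fiber_eq_zero
      (Submodule.lipschitzWith_starProjection _) hs
      (continuous_id.inner continuous_const).measurable
      (injOn_inner_preimage_starProjection_orthogonal_singleton hv) hM)

end Lines

theorem statement10_general (d : ℕ) (hd : 0 < d) (M : Set (EuclideanSpace ℝ (Fin d)))
    (hσ : ∃ s : ℕ → Set (EuclideanSpace ℝ (Fin d)),
      (M ⊆ ⋃ k, s k) ∧ ∀ k, μH[(d : ℝ) - 1] (s k) < ⊤) :
    ∀ᵐ v ∂(μH[(d : ℝ) - 1].restrict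
        (Metric.sphere (0 : EuclideanSpace ℝ (Fin d)) 1)),
      μH[(d : ℝ) - 1] {y : EuclideanSpace ℝ (Fin d) |
        y ∈ (Submodule.span ℝ {v})ᗮ ∧
          ¬ (M ∩ {x | ∃ t : ℝ, x = y + t • v}).Countable} = 0 :=
  ae_restrict_of_forall_mem Metric.isClosed_sphere.measurableSet fun _ hv =>
    hausdorffMeasure_setOf_uncountable_line_eq_zero (sub_nonneg.2 (Nat.one_le_cast.2 hd))
      (mem_sphere_zero_iff_norm.1 hv) hσ

theorem statement10 (d : ℕ) (hd : 0 < d) (M : Set (EuclideanSpace ℝ (Fin d)))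
    (hM : MeasurableSet M)
    (hσ : ∃ s : ℕ → Set (EuclideanSpace ℝ (Fin d)),
      (M ⊆ ⋃ k, s k) ∧ ∀ k, μH[(d : ℝ) - 1] (s k) < ⊤) :
    ∀ᵐ v ∂(μH[(d : ℝ) - 1].restrict
        (Metric.sphere (0 : EuclideanSpace ℝ (Fin d)) 1)),
      μH[(d : ℝ) - 1] {y : EuclideanSpace ℝ (Fin d) |
        y ∈ (Submodule.span ℝ {v})ᗮ ∧
          ¬ (M ∩ {x | ∃ t : ℝ, x = y + t • v}).Countable} = 0 :=
  statement10_general d hd M hσ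
end

section
/- There exists a closed set $A \subset \mathbb{R}^2$ which is intervally thin and has positive two-dimensional Lebesgue measure. -/
open MeasureTheory Set
open scoped ENNReal

lemma aux_exists_open_dense (r : ℝ≥0∞) (hr : 0 < r) :
    ∃ G : Set ℝ, IsOpen G ∧ Dense G ∧ volume G < r := by
  have hq : volume (Set.range ((↑) : ℚ → ℝ)) = 0 :=
    (Set.countable_range _).measure_zero _
  obtain ⟨U, hsub, hopen, hlt⟩ :=
    Set.exists_isOpen_lt_of_lt (Set.range ((↑) : ℚ → ℝ)) r (hq ▸ hr)
  exact ⟨U, hopen, Rat.denseRange_cast.mono hsub, hlt⟩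

lemma aux_tsum : (∑' n : ℕ, (4:ℝ≥0∞)⁻¹ * 2⁻¹ ^ n) = 2⁻¹ := by
  rw [ENNReal.tsum_mul_left, ENNReal.tsum_geometric, ENNReal.one_sub_inv_two, inv_inv]
  rw [show (4:ℝ≥0∞) = 2*2 by norm_num, ENNReal.mul_inv (by norm_num) (by norm_num),
    mul_assoc, ENNReal.inv_mul_cancel (by norm_num) (by norm_num), mul_one]

lemma aux_dist_lt (p q : EuclideanSpace ℝ (Fin 2)) (ε : ℝ) (hε : 0 < ε)
    (h0 : |p 0 - q 0| ≤ ε/2) (h1 : |p 1 - q 1| ≤ ε/2) : dist p q < ε := by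
  rw [EuclideanSpace.dist_eq, Fin.sum_univ_two, Real.dist_eq, Real.dist_eq]
  refine (Real.sqrt_lt' hε).2 ?_
  have h0' : (p 0 - q 0)^2 ≤ (ε/2)^2 := by
    rw [← sq_abs]; exact pow_le_pow_left₀ (abs_nonneg _) h0 2
  have h1' : (p 1 - q 1)^2 ≤ (ε/2)^2 := by
    rw [← sq_abs]; exact pow_le_pow_left₀ (abs_nonneg _) h1 2
  nlinarith [sq_abs (p 0 - q 0), sq_abs (p 1 - q 1)]

lemma aux_thin (G : ℕ → Set ℝ) (hGo : ∀ n, IsOpen (G n)) (hGd : ∀ n, Dense (G n))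
    (t : ℕ → ℝ) (ht : t = fun n => (((Denumerable.eqv ℚ).symm n : ℚ) : ℝ))
    (U2 : Set (ℝ × ℝ)) (hU2 : U2 = ⋃ n, {z : ℝ × ℝ | z.2 - t n * z.1 ∈ G n})
    (A : Set (EuclideanSpace ℝ (Fin 2)))
    (hA : A = (fun p : EuclideanSpace ℝ (Fin 2) => (p 0, p 1)) ⁻¹' ((Icc 0 1 ×ˢ Icc 0 1) \ U2)) :
    ∀ x y : EuclideanSpace ℝ (Fin 2), ∀ ε > 0,
    ∃ x' ∈ Metric.ball x ε, ∃ y' ∈ Metric.ball y ε, segment ℝ x' y' ∩ A = ∅ := by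
  intro x y ε hε
  set a : ℝ := if y 0 = x 0 then x 0 + ε/4 else y 0 with ha
  have ha1 : a ≠ x 0 := by
    rw [ha]; split_ifs with h
    · intro hc; nlinarith
    · exact h
  have ha2 : |a - y 0| ≤ ε/4 := by
    rw [ha]; split_ifs with h
    · rw [h, show x 0 + ε/4 - x 0 = ε/4 by ring, abs_of_pos (by positivity)]
    · simp; positivity
  set s : ℝ := (y 1 - x 1)/(a - x 0) with hsdef
  have hs : s * (a - x 0) = y 1 - x 1 := div_mul_cancel₀ _ (sub_ne_zero.2 ha1)
  obtain ⟨qt, hqt⟩ := exists_rat_near s (show (0:ℝ) < ε/(4*(|a - x 0|+1)) by positivity)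
  set n := (Denumerable.eqv ℚ) qt with hn
  have htn : t n = (qt : ℝ) := by simp [ht, hn]
  obtain ⟨g, hgG, hgball⟩ := (hGd n).exists_mem_open Metric.isOpen_ball
    ⟨x 1 - t n * x 0, Metric.mem_ball_self (by positivity : (0:ℝ) < ε/4)⟩
  have hrlt : |g - (x 1 - t n * x 0)| < ε/4 := by
    have := Metric.mem_ball.1 hgball
    rwa [Real.dist_eq] at this
  set r : ℝ := g - (x 1 - t n * x 0) with hr
  set E1 : EuclideanSpace ℝ (Fin 2) := EuclideanSpace.single 1 (1:ℝ) with hE1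
  set E0 : EuclideanSpace ℝ (Fin 2) := EuclideanSpace.single 0 (1:ℝ) with hE0
  set x' : EuclideanSpace ℝ (Fin 2) := x + r • E1 with hx'
  set y' : EuclideanSpace ℝ (Fin 2) := x' + (a - x 0) • (E0 + t n • E1) with hy'
  have hx'0 : x' 0 = x 0 := by
    simp [hx', hE1, EuclideanSpace.single_apply]
  have hx'1 : x' 1 = x 1 + r := by
    simp [hx', hE1, EuclideanSpace.single_apply]
  have hy'0 : y' 0 = a := by
    simp [hy', hx', hE0, hE1, EuclideanSpace.single_apply]
  have hy'1 : y' 1 = x 1 + r + (a - x 0) * t n := by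
    simp [hy', hx', hE0, hE1, EuclideanSpace.single_apply]
    try ring
  have hM : |a - x 0| * (ε/(4*(|a - x 0|+1))) ≤ ε/4 := by
    have hM0 : (0:ℝ) ≤ |a - x 0| := abs_nonneg _
    have hM1 : (0:ℝ) < |a - x 0| + 1 := by linarith
    rw [mul_div_assoc', div_le_div_iff₀ (by positivity) (by norm_num)]
    nlinarith
  have hts : |t n - s| < ε/(4*(|a - x 0|+1)) := by
    rw [htn, abs_sub_comm]; exact hqt
  refine ⟨x', ?_, y', ?_, ?_⟩
  · refine Metric.mem_ball.2 (aux_dist_lt _ _ _ hε ?_ ?_)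
    · rw [hx'0]; simp; positivity
    · rw [hx'1, show x 1 + r - x 1 = r by ring]
      linarith [hrlt]
  · refine Metric.mem_ball.2 (aux_dist_lt _ _ _ hε ?_ ?_)
    · rw [hy'0]; linarith [ha2]
    · rw [hy'1]
      have heq : x 1 + r + (a - x 0) * t n - y 1 = r + (a - x 0) * (t n - s) := by
        rw [mul_sub]
        nlinarith [hs]
      rw [heq]
      have h2 : |(a - x 0) * (t n - s)| ≤ ε/4 := by
        rw [abs_mul]
        calc |a - x 0| * |t n - s| ≤ |a - x 0| * (ε/(4*(|a - x 0|+1))) := by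
              apply mul_le_mul_of_nonneg_left hts.le (abs_nonneg _)
          _ ≤ ε/4 := hM
      calc |r + (a - x 0) * (t n - s)| ≤ |r| + |(a - x 0) * (t n - s)| := abs_add_le _ _
        _ ≤ ε/4 + ε/4 := by exact add_le_add hrlt.le h2
        _ = ε/2 := by ring
  · apply Set.eq_empty_iff_forall_notMem.2
    rintro p ⟨hpseg, hpA⟩
    obtain ⟨b₁, b₂, hb₁, hb₂, hbsum, hbp⟩ := hpseg
    have hp0 : p 0 = b₁ * x' 0 + b₂ * y' 0 := by
      rw [← hbp]; simp [PiLp.add_apply, PiLp.smul_apply]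
    have hp1 : p 1 = b₁ * x' 1 + b₂ * y' 1 := by
      rw [← hbp]; simp [PiLp.add_apply, PiLp.smul_apply]
    have hpU : (p 0, p 1) ∈ U2 := by
      rw [hU2]
      refine mem_iUnion.2 ⟨n, ?_⟩
      show p 1 - t n * p 0 ∈ G n
      have hkey : p 1 - t n * p 0 = g := by
        rw [hp0, hp1, hx'0, hx'1, hy'0, hy'1, hr]
        linear_combination g * hbsum
      rw [hkey]; exact hgG
    rw [hA] at hpA
    exact hpA.2 hpU


/-- `A` is intervally thin. -/
def IntervallyThin (A : Set (EuclideanSpace ℝ (Fin 2))) : Prop :=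
  ∀ x y : EuclideanSpace ℝ (Fin 2), ∀ ε > 0,
    ∃ x' ∈ Metric.ball x ε, ∃ y' ∈ Metric.ball y ε, segment ℝ x' y' ∩ A = ∅

theorem statement14 :
    ∃ A : Set (EuclideanSpace ℝ (Fin 2)), IsClosed A ∧ IntervallyThin A ∧
      0 < MeasureTheory.volume A := by
  choose G hGo hGd hGlt using fun n : ℕ =>
    aux_exists_open_dense (4⁻¹ * 2⁻¹ ^ n)
      (ENNReal.mul_pos (by norm_num) (pow_ne_zero _ (by norm_num)))
  set t : ℕ → ℝ := fun n => (((Denumerable.eqv ℚ).symm n : ℚ) : ℝ) with ht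
  set U2 : Set (ℝ × ℝ) := ⋃ n, {z : ℝ × ℝ | z.2 - t n * z.1 ∈ G n} with hU2
  set Q2 : Set (ℝ × ℝ) := Icc 0 1 ×ˢ Icc 0 1 with hQ2
  set A : Set (EuclideanSpace ℝ (Fin 2)) :=
    (fun p : EuclideanSpace ℝ (Fin 2) => (p 0, p 1)) ⁻¹' (Q2 \ U2) with hA
  have hU2open : IsOpen U2 := by
    refine isOpen_iUnion fun n => ?_
    exact (hGo n).preimage (by fun_prop)
  have hcont : Continuous (fun p : EuclideanSpace ℝ (Fin 2) => (p 0, p 1)) := by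
    fun_prop
  refine ⟨A, ?_, ?_, ?_⟩
  · exact (((isClosed_Icc.prod isClosed_Icc).sdiff hU2open)).preimage hcont
  · exact aux_thin G hGo hGd t ht U2 hU2 A (by rw [hA, hQ2])
  · -- measure part
    -- A = preimage under measurable equiv
    have hψ : MeasurePreserving
        (fun p : EuclideanSpace ℝ (Fin 2) => (p 0, p 1)) volume volume := by
      have h1 := EuclideanSpace.volume_preserving_symm_measurableEquiv_toLp (Fin 2)
      have h2 := MeasureTheory.volume_preserving_finTwoArrow ℝ
      exact h2.comp h1
    have hU2meas : MeasurableSet U2 := hU2open.measurableSet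
    have hDmeas : MeasurableSet (Q2 \ U2) :=
      (measurableSet_Icc.prod measurableSet_Icc).diff hU2meas
    have hvolA : volume A = volume (Q2 \ U2) :=
      hψ.measure_preimage hDmeas.nullMeasurableSet
    rw [hvolA]
    -- bound volume (Q2 ∩ U2)
    have key : volume (Q2 ∩ U2) ≤ 2⁻¹ := by
      have hsub : Q2 ∩ U2 ⊆ ⋃ n, {z : ℝ × ℝ | z.1 ∈ Icc (0:ℝ) 1 ∧ z.2 - t n * z.1 ∈ G n} := by
        rintro z ⟨hzQ, hzU⟩
        obtain ⟨i, hi⟩ := mem_iUnion.1 hzU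
        exact mem_iUnion.2 ⟨i, hzQ.1, hi⟩
      refine le_trans (measure_mono hsub) ?_
      refine le_trans (measure_iUnion_le _) ?_
      rw [← aux_tsum]
      refine ENNReal.tsum_le_tsum fun n => ?_
      have hVm : MeasurableSet {z : ℝ × ℝ | z.1 ∈ Icc (0:ℝ) 1 ∧ z.2 - t n * z.1 ∈ G n} := by
        refine MeasurableSet.inter ?_ ?_
        · exact measurable_fst measurableSet_Icc
        · exact (hGo n).measurableSet.preimage (by fun_prop)
      have : volume {z : ℝ × ℝ | z.1 ∈ Icc (0:ℝ) 1 ∧ z.2 - t n * z.1 ∈ G n}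
          ≤ volume (G n) * 1 := by
        rw [show (volume : Measure (ℝ × ℝ)) = (volume : Measure ℝ).prod volume from rfl,
          Measure.prod_apply hVm]
        have hslice : ∀ u : ℝ,
            volume (Prod.mk u ⁻¹' {z : ℝ × ℝ | z.1 ∈ Icc (0:ℝ) 1 ∧ z.2 - t n * z.1 ∈ G n})
            = (Icc (0:ℝ) 1).indicator (fun _ => volume (G n)) u := by
          intro u
          by_cases hu : u ∈ Icc (0:ℝ) 1
          · rw [indicator_of_mem hu]
            have : Prod.mk u ⁻¹' {z : ℝ × ℝ | z.1 ∈ Icc (0:ℝ) 1 ∧ z.2 - t n * z.1 ∈ G n}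
                = (fun v => v + -(t n * u)) ⁻¹' G n := by
              ext v
              simp only [mem_preimage, mem_setOf_eq, sub_eq_add_neg, hu, true_and]
            rw [this, measure_preimage_add_right]
          · rw [indicator_of_notMem hu]
            have he : Prod.mk u ⁻¹' {z : ℝ × ℝ | z.1 ∈ Icc (0:ℝ) 1 ∧ z.2 - t n * z.1 ∈ G n}
                = (∅ : Set ℝ) :=
              Set.eq_empty_iff_forall_notMem.2 fun v hv => hu hv.1
            rw [he, measure_empty]
        simp only [hslice]
        rw [lintegral_indicator measurableSet_Icc, setLIntegral_const, Real.volume_Icc]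
        simp
      calc volume {z : ℝ × ℝ | z.1 ∈ Icc (0:ℝ) 1 ∧ z.2 - t n * z.1 ∈ G n}
          ≤ volume (G n) * 1 := this
        _ ≤ 4⁻¹ * 2⁻¹ ^ n := by rw [mul_one]; exact (hGlt n).le
    have hQvol : volume Q2 = 1 := by
      rw [show (volume : Measure (ℝ × ℝ)) = (volume : Measure ℝ).prod volume from rfl,
        Measure.prod_prod, Real.volume_Icc]
      simp
    have : (2:ℝ≥0∞)⁻¹ ≤ volume (Q2 \ U2) := by
      have h1 : Q2 \ (Q2 ∩ U2) = Q2 \ U2 := by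
        ext z; simp only [mem_diff, mem_inter_iff]; tauto
      calc (2:ℝ≥0∞)⁻¹ = 1 - 2⁻¹ := ENNReal.one_sub_inv_two.symm
        _ ≤ volume Q2 - volume (Q2 ∩ U2) := by
            rw [hQvol]; exact tsub_le_tsub_left key 1
        _ ≤ volume (Q2 \ (Q2 ∩ U2)) := le_measure_diff
        _ = volume (Q2 \ U2) := by rw [h1]
    exact lt_of_lt_of_le (by norm_num) this
end
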